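/- For every p > 1 and every x > 0, one has log(cosh_p(x)) > (x/p) · tanh_p(x)^(p−1). -/

import Mathlib

/-!
With `s = sinh_p x` one has `x = arsinh_p s`, `cosh_p x ^ p = 1 + s ^ p` and
`tanh_p x ^ (p - 1) = s ^ (p - 1) (1 + s ^ p) ^ (-(p - 1) / p)`, so the claim becomes `Φ(s) > 0`
for an explicit function `Φ` with `Φ(0) = 0`. Its derivative is a positive factor times
`s · cosh_p x ^ (p - 1) - arsinh_p s`, which is positive because
`arsinh_p s ≤ s < s · cosh_p x ^ (p - 1)`.

For `sinh_p` to invert `arsinh_p`, the latter must map `[0, ∞)` onto `[0, ∞)`; this follows from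
`(1 + t ^ p) ^ (-1 / p) ≥ (1 + t)⁻¹`, i.e. `arsinh_p y ≥ log (1 + y)`.
-/

open Real Set Filter Topology

/-- Generalized inverse sine: `arcsinp p x = ∫₀ˣ (1 - tᵖ)^(-1/p) dt`. -/
noncomputable def arcsinp (p x : ℝ) : ℝ := ∫ t in (0:ℝ)..x, (1 - t ^ p) ^ (-(1/p))

/-- The generalized half-pi: `π_p/2 = arcsin_p 1`. -/
noncomputable def pipHalf (p : ℝ) : ℝ := arcsinp p 1

/-- Generalized sine: the inverse of `arcsinp p` viewed as a map on `[0,1]`. -/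
noncomputable def sinp (p : ℝ) : ℝ → ℝ := Function.invFunOn (arcsinp p) (Set.Icc 0 1)

/-- Generalized cosine. -/
noncomputable def cosp (p x : ℝ) : ℝ := (1 - (sinp p x) ^ p) ^ (1/p : ℝ)

/-- Generalized tangent. -/
noncomputable def tanp (p x : ℝ) : ℝ := sinp p x / cosp p x

/-- Generalized inverse hyperbolic sine: `arsinhp p x = ∫₀ˣ (1 + tᵖ)^(-1/p) dt`. -/
noncomputable def arsinhp (p x : ℝ) : ℝ := ∫ t in (0:ℝ)..x, (1 + t ^ p) ^ (-(1/p))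

/-- Generalized hyperbolic sine: the inverse of `arsinhp p` viewed as a map on `[0,∞)`. -/
noncomputable def sinhp (p : ℝ) : ℝ → ℝ := Function.invFunOn (arsinhp p) (Set.Ici 0)

/-- Generalized hyperbolic cosine. -/
noncomputable def coshp (p x : ℝ) : ℝ := (1 + (sinhp p x) ^ p) ^ (1/p : ℝ)

/-- Generalized hyperbolic tangent. -/
noncomputable def tanhp (p x : ℝ) : ℝ := sinhp p x / coshp p x

/-- The integrand of `arsinhp`, made even so that it is continuous on all of `ℝ`
(for `t < 0` the base `1 + t ^ p` of the rpow may vanish). -/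
noncomputable def arsinhpIntegrand (p t : ℝ) : ℝ := (1 + |t| ^ p) ^ (-(1 / p))

noncomputable def arsinhpExt (p y : ℝ) : ℝ := ∫ t in (0 : ℝ)..y, arsinhpIntegrand p t

/-- `p · (log cosh_p x - (x / p) · tanh_p x ^ (p - 1))`, written in the variable `s = sinh_p x`. -/
noncomputable def logCoshGap (p s : ℝ) : ℝ :=
  log (1 + s ^ p) - arsinhpExt p s * (s ^ (p - 1) * (1 + s ^ p) ^ (-((p - 1) / p)))

section

variable {p : ℝ}

theorem one_add_rpow_pos {s : ℝ} (hs : 0 ≤ s) : 0 < 1 + s ^ p := by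
  have := rpow_nonneg hs p
  linarith

theorem continuous_arsinhpIntegrand (hp : 0 < p) : Continuous (arsinhpIntegrand p) :=
  ((continuous_abs.rpow_const fun _ => Or.inr hp.le).const_add 1).rpow_const
    fun t => Or.inl (one_add_rpow_pos (abs_nonneg t)).ne'

theorem arsinhpIntegrand_le_one (hp : 0 < p) (t : ℝ) : arsinhpIntegrand p t ≤ 1 :=
  rpow_le_one_of_one_le_of_nonpos (by linarith [rpow_nonneg (abs_nonneg t) p])
    (neg_nonpos.2 (by positivity))

theorem inv_one_add_le_arsinhpIntegrand (hp : 1 ≤ p) {t : ℝ} (ht : 0 ≤ t) :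
    (1 + t)⁻¹ ≤ arsinhpIntegrand p t := by
  have hsuper : 1 + t ^ p ≤ (1 + t) ^ p := by
    simpa using add_rpow_le_rpow_add zero_le_one ht hp
  have hinv : ((1 + t) ^ p) ^ (-(1 / p)) = (1 + t)⁻¹ := by
    rw [← rpow_mul (by linarith), show p * -(1 / p) = -1 by field_simp, rpow_neg_one]
  rw [arsinhpIntegrand, abs_of_nonneg ht, ← hinv]
  exact rpow_le_rpow_of_nonpos (one_add_rpow_pos ht) hsuper (neg_nonpos.2 (by positivity))

theorem hasDerivAt_arsinhpExt (hp : 0 < p) (y : ℝ) :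
    HasDerivAt (arsinhpExt p) (arsinhpIntegrand p y) y :=
  ((continuous_arsinhpIntegrand hp).integral_hasStrictDerivAt 0 y).hasDerivAt

theorem continuous_arsinhpExt (hp : 0 < p) : Continuous (arsinhpExt p) :=
  continuous_iff_continuousAt.2 fun y => (hasDerivAt_arsinhpExt hp y).continuousAt

theorem arsinhpExt_zero (p : ℝ) : arsinhpExt p 0 = 0 := intervalIntegral.integral_same

theorem arsinhp_eq_arsinhpExt {y : ℝ} (hy : 0 ≤ y) : arsinhp p y = arsinhpExt p y := by
  refine intervalIntegral.integral_congr fun t ht => ?_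
  rw [uIcc_of_le hy] at ht
  simp [arsinhpIntegrand, abs_of_nonneg ht.1]

theorem arsinhpExt_le_self (hp : 0 < p) {y : ℝ} (hy : 0 ≤ y) : arsinhpExt p y ≤ y := by
  simpa [arsinhpExt] using intervalIntegral.integral_mono_on hy
    ((continuous_arsinhpIntegrand hp).intervalIntegrable 0 y)
    (intervalIntegrable_const (μ := MeasureTheory.volume))
    fun t _ => arsinhpIntegrand_le_one hp t

theorem log_one_add_le_arsinhpExt (hp : 1 ≤ p) {y : ℝ} (hy : 0 ≤ y) :
    log (1 + y) ≤ arsinhpExt p y := by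
  have hlog : ∫ t in (0 : ℝ)..y, (1 + t)⁻¹ = log (1 + y) := by
    rw [intervalIntegral.integral_comp_add_left (fun t => t⁻¹),
      integral_inv_of_pos (by norm_num) (by linarith)]
    simp
  rw [← hlog]
  refine intervalIntegral.integral_mono_on hy ?_
    ((continuous_arsinhpIntegrand (by linarith)).intervalIntegrable 0 y)
    fun t ht => inv_one_add_le_arsinhpIntegrand hp ht.1
  refine (ContinuousOn.inv₀ (by fun_prop) fun t ht => ?_).intervalIntegrable
  rw [uIcc_of_le hy] at ht
  linarith [ht.1]

theorem exists_arsinhp_eq (hp : 1 ≤ p) {x : ℝ} (hx : 0 ≤ x) :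
    ∃ y ∈ Ici (0 : ℝ), arsinhp p y = x := by
  have hY : 0 ≤ exp x - 1 := by linarith [one_le_exp hx]
  have hxY : x ≤ arsinhpExt p (exp x - 1) := by
    simpa using log_one_add_le_arsinhpExt hp hY
  obtain ⟨y, hy, hyx⟩ := intermediate_value_Icc hY
    (continuous_arsinhpExt (by linarith)).continuousOn
    (show x ∈ Icc (arsinhpExt p 0) _ from ⟨(arsinhpExt_zero p).symm ▸ hx, hxY⟩)
  exact ⟨y, hy.1, by rw [arsinhp_eq_arsinhpExt hy.1, hyx]⟩

theorem sinhp_nonneg (hp : 1 ≤ p) {x : ℝ} (hx : 0 ≤ x) : 0 ≤ sinhp p x :=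
  Function.invFunOn_mem (exists_arsinhp_eq hp hx)

theorem arsinhp_sinhp (hp : 1 ≤ p) {x : ℝ} (hx : 0 ≤ x) : arsinhp p (sinhp p x) = x :=
  Function.invFunOn_eq (exists_arsinhp_eq hp hx)

theorem sinhp_pos (hp : 1 ≤ p) {x : ℝ} (hx : 0 < x) : 0 < sinhp p x := by
  refine (sinhp_nonneg hp hx.le).lt_of_ne fun h => hx.ne' ?_
  rw [← arsinhp_sinhp hp hx.le, ← h, arsinhp_eq_arsinhpExt le_rfl, arsinhpExt_zero]

theorem log_coshp {x : ℝ} (hs : 0 ≤ sinhp p x) :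
    log (coshp p x) = log (1 + sinhp p x ^ p) / p := by
  rw [coshp, log_rpow (one_add_rpow_pos hs)]
  ring

theorem tanhp_rpow_sub_one {x : ℝ} (hs : 0 ≤ sinhp p x) :
    tanhp p x ^ (p - 1) = sinhp p x ^ (p - 1) * (1 + sinhp p x ^ p) ^ (-((p - 1) / p)) := by
  have hu := one_add_rpow_pos (p := p) hs
  rw [tanhp, coshp, div_rpow hs (rpow_nonneg hu.le _), ← rpow_mul hu.le, rpow_neg hu.le]
  ring_nf

theorem logCoshGap_zero (hp : 0 < p) : logCoshGap p 0 = 0 := by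
  simp [logCoshGap, zero_rpow hp.ne', arsinhpExt_zero]

theorem continuousOn_logCoshGap (hp : 1 ≤ p) : ContinuousOn (logCoshGap p) (Ici 0) := by
  intro y hy
  have hu := one_add_rpow_pos (p := p) hy
  have hpow : Continuous fun z : ℝ => 1 + z ^ p :=
    continuous_const.add (continuous_rpow_const (by linarith))
  exact ((hpow.continuousAt.log hu.ne').sub ((continuous_arsinhpExt (by linarith)).continuousAt.mul
    ((continuous_rpow_const (by linarith)).continuousAt.mul
      (hpow.continuousAt.rpow_const (Or.inl hu.ne'))))).continuousWithinAt

theorem hasDerivAt_logCoshGap (hp : 0 < p) {y : ℝ} (hy : 0 < y) :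
    HasDerivAt (logCoshGap p)
      ((p - 1) * y ^ (p - 2) * (1 + y ^ p) ^ (-((p - 1) / p) - 1) *
        (y * (1 + y ^ p) ^ ((p - 1) / p) - arsinhpExt p y)) y := by
  set q := (p - 1) / p with hq
  have hu := one_add_rpow_pos (p := p) hy.le
  have hpow : HasDerivAt (fun z : ℝ => 1 + z ^ p) (p * y ^ (p - 1)) y :=
    (hasDerivAt_rpow_const (Or.inl hy.ne')).const_add 1
  have hraw := (hpow.log hu.ne').sub ((hasDerivAt_arsinhpExt hp y).mul
    ((hasDerivAt_rpow_const (p := p - 1) (Or.inl hy.ne')).mul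
      (hpow.rpow_const (p := -q) (Or.inl hu.ne'))))
  refine hraw.congr_deriv ?_
  -- express every power through `w = (1 + y ^ p) ^ q`, `y ^ (p - 2)` and `y`
  have hF : arsinhpIntegrand p y = (1 + y ^ p) ^ q * (1 + y ^ p)⁻¹ := by
    rw [arsinhpIntegrand, abs_of_pos hy, ← rpow_neg_one, ← rpow_add hu, hq]
    congr 1
    field_simp
    ring
  have hneg : (1 + y ^ p) ^ (-q) = ((1 + y ^ p) ^ q)⁻¹ := rpow_neg hu.le q
  have hneg1 : (1 + y ^ p) ^ (-q - 1) = ((1 + y ^ p) ^ q)⁻¹ * (1 + y ^ p)⁻¹ := by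
    rw [sub_eq_add_neg, rpow_add hu, rpow_neg hu.le, rpow_neg_one]
  have hy1 : y ^ (p - 1) = y ^ (p - 2) * y := by
    rw [← rpow_add_one hy.ne']
    ring_nf
  have hy2 : y ^ (p - 1 - 1) = y ^ (p - 2) := by ring_nf
  have hyp : y ^ p = y ^ (p - 2) * (y * y) := by
    rw [← mul_assoc, ← rpow_add_one hy.ne', ← rpow_add_one hy.ne']
    ring_nf
  have hw : 0 < (1 + y ^ p) ^ q := rpow_pos_of_pos hu q
  simp only [Pi.mul_apply]
  rw [hF, hneg, hneg1, hy2, hy1]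
  generalize (1 + y ^ p) ^ q = w at hw ⊢
  rw [hyp] at hu ⊢
  rw [hq]
  field_simp
  ring

theorem strictMonoOn_logCoshGap (hp : 1 < p) : StrictMonoOn (logCoshGap p) (Ici 0) := by
  refine strictMonoOn_of_deriv_pos (convex_Ici 0) (continuousOn_logCoshGap hp.le) fun y hy => ?_
  rw [interior_Ici] at hy
  have hy : 0 < y := hy
  rw [(hasDerivAt_logCoshGap (by linarith) hy).deriv]
  have hu := one_add_rpow_pos (p := p) hy.le
  have hw : 1 < (1 + y ^ p) ^ ((p - 1) / p) :=
    one_lt_rpow (by linarith [rpow_pos_of_pos hy p]) (div_pos (by linarith) (by linarith))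
  have hgap : 0 < y * (1 + y ^ p) ^ ((p - 1) / p) - arsinhpExt p y := by
    nlinarith [arsinhpExt_le_self (p := p) (by linarith) hy.le]
  have hp1 : 0 < p - 1 := by linarith
  have := rpow_pos_of_pos hy (p - 2)
  have := rpow_pos_of_pos hu (-((p - 1) / p) - 1)
  positivity

theorem logCoshGap_pos (hp : 1 < p) {s : ℝ} (hs : 0 < s) : 0 < logCoshGap p s := by
  simpa [logCoshGap_zero (by linarith : 0 < p)] using
    strictMonoOn_logCoshGap hp self_mem_Ici (mem_Ici.2 hs.le) hs

end

theorem stmt_10 (p : ℝ) (hp : 1 < p) (x : ℝ) (hx : 0 < x) :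
    Real.log (coshp p x) > (x / p) * tanhp p x ^ (p - 1) := by
  have hs := sinhp_pos hp.le hx
  have hgap := logCoshGap_pos hp hs
  rw [logCoshGap, ← arsinhp_eq_arsinhpExt hs.le, arsinhp_sinhp hp.le hx.le] at hgap
  rw [gt_iff_lt, log_coshp hs.le, tanhp_rpow_sub_one hs.le, div_mul_eq_mul_div,
    div_lt_div_iff_of_pos_right (by linarith)]
  linarith
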